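/- arXiv:1808.05213 — 4 statements merged into one kernel-verified Lean document; each statement's English description precedes it below -/
import Mathlib

section
/- Let L be an n×n Latin square and let S be a set of n cells of L. Then S is a 3-dominating set of the Latin square graph L_3(L,n) if and only if S is a transversal of L (a set of n cells with exactly one in each row, one in each column, and containing each symbol exactly once). -/
def IsLatin (n : ℕ) (L : Fin n → Fin n → Fin n) : Prop :=
  (∀ i, Function.Bijective (L i)) ∧ (∀ j, Function.Bijective fun i => L i j)

def latinGraph (n : ℕ) (L : Fin n → Fin n → Fin n) : SimpleGraph (Fin n × Fin n) :=
  SimpleGraph.fromRel fun a b => a.1 = b.1 ∨ a.2 = b.2 ∨ L a.1 a.2 = L b.1 b.2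

def IsKDominating {V : Type*} (G : SimpleGraph V) (k : ℕ) (S : Set V) : Prop :=
  ∀ v ∉ S, k ≤ (S ∩ G.neighborSet v).ncard

def IsTransversal (n : ℕ) (L : Fin n → Fin n → Fin n) (S : Set (Fin n × Fin n)) : Prop :=
  (∀ i : Fin n, ∃! c, c ∈ S ∧ c.1 = i) ∧
  (∀ j : Fin n, ∃! c, c ∈ S ∧ c.2 = j) ∧
  (∀ s : Fin n, ∃! c, c ∈ S ∧ L c.1 c.2 = s)

def IsQuasiTransversal (n : ℕ) (L : Fin n → Fin n → Fin n) (S : Set (Fin n × Fin n)) : Prop :=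
  (∃ i0, ({c ∈ S | c.1 = i0}).ncard = 2 ∧ ∀ i, i ≠ i0 → ({c ∈ S | c.1 = i}).ncard = 1) ∧
  (∃ j0, ({c ∈ S | c.2 = j0}).ncard = 2 ∧ ∀ j, j ≠ j0 → ({c ∈ S | c.2 = j}).ncard = 1) ∧
  (∃ s0, ({c ∈ S | L c.1 c.2 = s0}).ncard = 2 ∧ ∀ s, s ≠ s0 → ({c ∈ S | L c.1 c.2 = s}).ncard = 1)

def IsPartialTransversal (n : ℕ) (L : Fin n → Fin n → Fin n) (S : Set (Fin n × Fin n)) : Prop :=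
  ∀ a ∈ S, ∀ b ∈ S, a ≠ b → a.1 ≠ b.1 ∧ a.2 ≠ b.2 ∧ L a.1 a.2 ≠ L b.1 b.2

def IsKPlex (n : ℕ) (L : Fin n → Fin n → Fin n) (k : ℕ) (S : Set (Fin n × Fin n)) : Prop :=
  (∀ i, ({c ∈ S | c.1 = i}).ncard = k) ∧ (∀ j, ({c ∈ S | c.2 = j}).ncard = k) ∧
  (∀ s, ({c ∈ S | L c.1 c.2 = s}).ncard = k)

noncomputable def gamma3 (n : ℕ) (L : Fin n → Fin n → Fin n) : ℕ :=
  sInf {m | ∃ S : Set (Fin n × Fin n), IsKDominating (latinGraph n L) 3 S ∧ S.ncard = m}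

noncomputable def domatic3 (n : ℕ) (L : Fin n → Fin n → Fin n) : ℕ :=
  sSup {t | ∃ P : Fin t → Set (Fin n × Fin n),
    (Pairwise fun a b => Disjoint (P a) (P b)) ∧ (⋃ i, P i) = Set.univ ∧
    ∀ i, IsKDominating (latinGraph n L) 3 (P i)}

/-! A cell outside `S` sees `S` only through its row, its column and its symbol class, so a
3-dominating set that misses a whole row (column, symbol) would need, summed over the `n` cells of
that line, `3n` hits in the two other kinds of lines, which hold only `n + n` cells of `S`. Hence
every line meets `S`, and `|S| = n` forces it to meet each line exactly once. Conversely, for a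
transversal the row-, column- and symbol-representatives of a cell outside `S` are three distinct
neighbours, as two lines of different kinds meet in a single cell. -/

open Function Finset

noncomputable def fiberCard {α β : Type*} (S : Set α) (f : α → β) (b : β) : ℕ :=
  {a ∈ S | f a = b}.ncard

section Fiber

variable {α β : Type*}

lemma sum_fiberCard [Fintype α] [Fintype β] (S : Set α) (f : α → β) :
    ∑ b, fiberCard S f b = S.ncard := by
  classical
  rw [Set.ncard_eq_toFinset_card' S,
    card_eq_sum_card_fiberwise (f := f) (t := univ) fun _ _ => mem_univ _]
  refine sum_congr rfl fun b _ => ?_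
  rw [fiberCard, Set.ncard_eq_toFinset_card']
  congr 1
  ext a
  simp

variable {S : Set α} {f : α → β}

lemma notMem_of_fiberCard_eq_zero [Finite α] {a : α} (h : fiberCard S f (f a) = 0) : a ∉ S :=
  fun ha => ((Set.ncard_eq_zero (Set.toFinite _)).mp h).subset ⟨ha, rfl⟩

lemma existsUnique_of_fiberCard_eq_one {b : β} (h : fiberCard S f b = 1) :
    ∃! a, a ∈ S ∧ f a = b := by
  obtain ⟨a, ha⟩ := Set.ncard_eq_one.mp h
  exact ⟨a, (ha ▸ rfl : a ∈ {a ∈ S | f a = b}), fun a' ha' => (ha ▸ ha' : a' ∈ ({a} : Set α))⟩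

end Fiber

lemma eq_one_of_sum_eq_card {ι : Type*} [Fintype ι] {f : ι → ℕ}
    (hsum : ∑ i, f i = Fintype.card ι) (h : ∀ i, 1 ≤ f i) (i : ι) : f i = 1 :=
  ((sum_eq_sum_iff_of_le fun i _ => h i).mp (by simp [hsum]) i (mem_univ i)).symm

lemma isEmpty_of_three_le_add {ι : Type*} [Fintype ι] {f g : ι → ℕ} {σ τ : ι → ι}
    (hσ : Bijective σ) (hτ : Bijective τ) (hf : ∑ i, f i = Fintype.card ι)
    (hg : ∑ i, g i = Fintype.card ι)
    (h : ∀ i, 3 ≤ f (σ i) + g (τ i)) : IsEmpty ι := by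
  have : 3 * Fintype.card ι ≤ 2 * Fintype.card ι := calc
    3 * Fintype.card ι = ∑ _i : ι, 3 := by simp [mul_comm]
    _ ≤ ∑ i, (f (σ i) + g (τ i)) := sum_le_sum fun i _ => h i
    _ = 2 * Fintype.card ι := by
      rw [sum_add_distrib, hσ.sum_comp f, hτ.sum_comp g, hf, hg, two_mul]
  exact Fintype.card_eq_zero_iff.mp (by omega)

section Latin

variable {n : ℕ} {L : Fin n → Fin n → Fin n} {S : Set (Fin n × Fin n)}

lemma IsLatin.eq_of_fst_eq_of_uncurry_eq (hL : IsLatin n L) {a b : Fin n × Fin n}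
    (h₁ : a.1 = b.1) (h : uncurry L a = uncurry L b) : a = b :=
  Prod.ext h₁ ((hL.1 b.1).injective (by simpa [h₁, uncurry] using h))

lemma IsLatin.eq_of_snd_eq_of_uncurry_eq (hL : IsLatin n L) {a b : Fin n × Fin n}
    (h₂ : a.2 = b.2) (h : uncurry L a = uncurry L b) : a = b :=
  Prod.ext ((hL.2 b.2).injective (by simpa [h₂, uncurry] using h)) h₂

lemma latinGraph_adj {a b : Fin n × Fin n} :
    (latinGraph n L).Adj a b ↔ a ≠ b ∧ (a.1 = b.1 ∨ a.2 = b.2 ∨ uncurry L a = uncurry L b) := by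
  simp only [latinGraph, SimpleGraph.fromRel_adj, uncurry, eq_comm (a := b.1), eq_comm (a := b.2),
    eq_comm (a := L b.1 b.2), or_self]

lemma ncard_inter_neighborSet_le (v : Fin n × Fin n) :
    (S ∩ (latinGraph n L).neighborSet v).ncard ≤
      fiberCard S Prod.fst v.1 + fiberCard S Prod.snd v.2 +
        fiberCard S (uncurry L) (uncurry L v) := by
  calc _ ≤ ({c ∈ S | c.1 = v.1} ∪ {c ∈ S | c.2 = v.2} ∪
          {c ∈ S | uncurry L c = uncurry L v}).ncard := by
        refine Set.ncard_le_ncard ?_ (Set.toFinite _)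
        rintro c ⟨hc, hadj⟩
        rcases (latinGraph_adj.mp hadj).2 with h | h | h
        · exact .inl (.inl ⟨hc, h.symm⟩)
        · exact .inl (.inr ⟨hc, h.symm⟩)
        · exact .inr ⟨hc, h.symm⟩
    _ ≤ _ := by
        grw [Set.ncard_union_le, Set.ncard_union_le]
        rfl

lemma three_le_fiberCard_add (hS : IsKDominating (latinGraph n L) 3 S) {v : Fin n × Fin n}
    (hv : v ∉ S) :
    3 ≤ fiberCard S Prod.fst v.1 + fiberCard S Prod.snd v.2 +
      fiberCard S (uncurry L) (uncurry L v) :=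
  (hS v hv).trans (ncard_inter_neighborSet_le v)

lemma sum_fiberCard_eq_card (hcard : S.ncard = n) (f : Fin n × Fin n → Fin n) :
    ∑ x, fiberCard S f x = Fintype.card (Fin n) := by
  rw [sum_fiberCard, hcard, Fintype.card_fin]

lemma one_le_fiberCard_fst (hL : IsLatin n L) (hS : IsKDominating (latinGraph n L) 3 S)
    (hcard : S.ncard = n) (i : Fin n) : 1 ≤ fiberCard S Prod.fst i := by
  by_contra! h
  have hi : fiberCard S Prod.fst i = 0 := by omega
  have := isEmpty_of_three_le_add bijective_id (hL.1 i) (sum_fiberCard_eq_card hcard _)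
    (sum_fiberCard_eq_card hcard _) fun j => by
      simpa [hi] using three_le_fiberCard_add hS (v := (i, j)) (notMem_of_fiberCard_eq_zero hi)
  exact this.elim i

lemma one_le_fiberCard_snd (hL : IsLatin n L) (hS : IsKDominating (latinGraph n L) 3 S)
    (hcard : S.ncard = n) (j : Fin n) : 1 ≤ fiberCard S Prod.snd j := by
  by_contra! h
  have hj : fiberCard S Prod.snd j = 0 := by omega
  have := isEmpty_of_three_le_add bijective_id (hL.2 j) (sum_fiberCard_eq_card hcard _)
    (sum_fiberCard_eq_card hcard _) fun i => by
      simpa [hj] using three_le_fiberCard_add hS (v := (i, j)) (notMem_of_fiberCard_eq_zero hj)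
  exact this.elim j

lemma one_le_fiberCard_uncurry (hL : IsLatin n L) (hS : IsKDominating (latinGraph n L) 3 S)
    (hcard : S.ncard = n) (s : Fin n) : 1 ≤ fiberCard S (uncurry L) s := by
  by_contra! h
  have hs : fiberCard S (uncurry L) s = 0 := by omega
  obtain ⟨col, hcol⟩ : ∃ col : Fin n → Fin n, ∀ i, L i (col i) = s :=
    ⟨_, fun i => surjInv_eq (hL.1 i).2 s⟩
  have hcol_bij : Bijective col := Finite.injective_iff_bijective.mp fun i i' h =>
    (hL.2 (col i)).injective (by rw [hcol i, h, hcol i'])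
  have := isEmpty_of_three_le_add (f := fiberCard S Prod.fst) (g := fiberCard S Prod.snd)
    bijective_id hcol_bij (sum_fiberCard_eq_card hcard _) (sum_fiberCard_eq_card hcard _)
    fun i => by
      have hv : (i, col i) ∉ S :=
        notMem_of_fiberCard_eq_zero (f := uncurry L) (by simpa [hcol] using hs)
      simpa [hcol, hs] using three_le_fiberCard_add hS hv
  exact this.elim s

lemma IsLatin.isTransversal_of_isKDominating (hL : IsLatin n L) (hcard : S.ncard = n)
    (hS : IsKDominating (latinGraph n L) 3 S) : IsTransversal n L S := by
  have h f (hf : ∀ x, 1 ≤ fiberCard S f x) x : ∃! c, c ∈ S ∧ f c = x :=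
    existsUnique_of_fiberCard_eq_one (eq_one_of_sum_eq_card (sum_fiberCard_eq_card hcard f) hf x)
  exact ⟨h _ (one_le_fiberCard_fst hL hS hcard), h _ (one_le_fiberCard_snd hL hS hcard),
    h _ (one_le_fiberCard_uncurry hL hS hcard)⟩

lemma IsLatin.isKDominating_of_isTransversal (hL : IsLatin n L) (hT : IsTransversal n L S) :
    IsKDominating (latinGraph n L) 3 S := by
  intro v hv
  obtain ⟨a, ⟨haS, ha⟩, -⟩ := hT.1 v.1
  obtain ⟨b, ⟨hbS, hb⟩, -⟩ := hT.2.1 v.2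
  obtain ⟨d, ⟨hdS, hd⟩, -⟩ := hT.2.2 (L v.1 v.2)
  have hne {c} (hc : c ∈ S) : c ≠ v := fun h => hv (h ▸ hc)
  have hab : a ≠ b := fun h => hne haS (Prod.ext ha (h ▸ hb))
  have had : a ≠ d := fun h => hne haS (hL.eq_of_fst_eq_of_uncurry_eq ha (h ▸ hd))
  have hbd : b ≠ d := fun h => hne hbS (hL.eq_of_snd_eq_of_uncurry_eq hb (h ▸ hd))
  calc 3 = ({a, b, d} : Set _).ncard := (Set.ncard_eq_three.mpr ⟨a, b, d, hab, had, hbd, rfl⟩).symm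
    _ ≤ _ := by
      refine Set.ncard_le_ncard ?_ (Set.toFinite _)
      rintro c (rfl | rfl | rfl)
      · exact ⟨haS, latinGraph_adj.mpr ⟨(hne haS).symm, .inl ha.symm⟩⟩
      · exact ⟨hbS, latinGraph_adj.mpr ⟨(hne hbS).symm, .inr (.inl hb.symm)⟩⟩
      · exact ⟨hdS, latinGraph_adj.mpr ⟨(hne hdS).symm, .inr (.inr hd.symm)⟩⟩

end Latin

theorem stmt4 (n : ℕ) (L : Fin n → Fin n → Fin n) (hL : IsLatin n L)
    (S : Set (Fin n × Fin n)) (hcard : S.ncard = n) :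
    IsKDominating (latinGraph n L) 3 S ↔ IsTransversal n L S :=
  ⟨hL.isTransversal_of_isKDominating hcard, hL.isKDominating_of_isTransversal⟩
end

section
/- Every quasi-transversal of a Latin square L of order n ≥ 3 is a 3-dominating set of size n+1 in the Latin square graph L_3(L,n); conversely, every 3-dominating set of L_3(L,n) of size n+1 is a quasi-transversal of L. -/
/-! Give each cell three coordinates `cellCoord L a`, `a : Fin 3`: its row, column and symbol.
In a Latin square any two coordinates determine the cell, so for `v ∉ S` the three sets
`{c ∈ S | cellCoord L a c = cellCoord L a v}` are disjoint and their sizes add up to the number of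
neighbours of `v` in `S`. Hence `S` is 3-dominating as soon as every line `cellCoord L a · = x` meets
`S`, and a quasi-transversal is exactly a set of size `n + 1` meeting every line. Conversely, if a
line misses a 3-dominating `S`, summing the neighbour counts over its `n` cells counts every cell of
`S` once for each of the two other coordinates, so `3 n ≤ 2 |S| = 2 n + 2`, impossible for `n ≥ 3`.
-/

open Finset

lemma Set.ncard_eq_sum_ncard_fiber {α β : Type*} [Fintype α] [Fintype β] (S : Set α) (f : α → β) :
    S.ncard = ∑ b, {a ∈ S | f a = b}.ncard := by
  classical
  rw [Set.ncard_eq_toFinset_card' S,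
    card_eq_sum_card_fiberwise (f := f) (t := Finset.univ) (by simp)]
  refine sum_congr rfl fun b _ => ?_
  rw [← Set.ncard_coe_finset]
  congr 1
  ext a
  simp

lemma exists_eq_two_forall_ne_eq_one_iff {ι : Type*} [Fintype ι] [DecidableEq ι] (r : ι → ℕ) :
    (∃ i₀, r i₀ = 2 ∧ ∀ i, i ≠ i₀ → r i = 1) ↔
      (∀ i, 1 ≤ r i) ∧ ∑ i, r i = Fintype.card ι + 1 := by
  constructor
  · rintro ⟨i₀, h₀, h₁⟩
    have hrest : ∑ i ∈ univ.erase i₀, r i = ∑ i ∈ univ.erase i₀, 1 :=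
      sum_congr rfl fun i hi => h₁ i (ne_of_mem_erase hi)
    refine ⟨fun i => ?_, ?_⟩
    · rcases eq_or_ne i i₀ with rfl | hi
      · omega
      · exact (h₁ i hi).ge
    · rw [← add_sum_erase _ _ (mem_univ i₀), hrest, h₀, sum_const, smul_eq_mul, mul_one,
        card_erase_of_mem (mem_univ _), card_univ]
      have := Fintype.card_pos_iff.mpr ⟨i₀⟩
      omega
  · rintro ⟨hpos, hsum⟩
    obtain ⟨i₀, h₀⟩ : ∃ i₀, 2 ≤ r i₀ := by
      by_contra! h
      have : ∑ i, r i = ∑ _i : ι, 1 := sum_congr rfl fun i _ => by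
        have := hpos i; have := h i; omega
      simp [this] at hsum
    have hle : ∀ i ∈ univ.erase i₀, 1 ≤ r i := fun i _ => hpos i
    have hsplit := add_sum_erase univ r (mem_univ i₀)
    have hbound := sum_le_sum hle
    have hcard : ∑ _i ∈ univ.erase i₀, 1 = Fintype.card ι - 1 := by
      simp [card_erase_of_mem]
    have hrest := (sum_eq_sum_iff_of_le hle).mp (by omega)
    refine ⟨i₀, by omega, fun i hi => (hrest i (mem_erase.mpr ⟨hi, mem_univ i⟩)).symm⟩

variable {n : ℕ} {L : Fin n → Fin n → Fin n}

def cellCoord (L : Fin n → Fin n → Fin n) (a : Fin 3) (c : Fin n × Fin n) : Fin n :=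
  ![c.1, c.2, L c.1 c.2] a

lemma latinGraph_adj_iff {v c : Fin n × Fin n} :
    (latinGraph n L).Adj v c ↔ v ≠ c ∧ ∃ a, cellCoord L a c = cellCoord L a v := by
  simp only [latinGraph, SimpleGraph.fromRel_adj, cellCoord, Fin.exists_fin_succ,
    Matrix.cons_val_zero, Matrix.cons_val_succ, Matrix.cons_val_fin_one, exists_const]
  grind

namespace IsLatin

lemma eq_of_cellCoord_eq (hL : IsLatin n L) {a b : Fin 3} (hab : a ≠ b)
    {c v : Fin n × Fin n} (ha : cellCoord L a c = cellCoord L a v)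
    (hb : cellCoord L b c = cellCoord L b v) : c = v := by
  obtain ⟨i, j⟩ := c
  obtain ⟨i', j'⟩ := v
  fin_cases a <;> fin_cases b <;> simp only [ne_eq, not_true_eq_false] at hab
  · exact Prod.ext ha hb
  · obtain rfl : i = i' := ha
    exact Prod.ext rfl ((hL.1 i).1 hb)
  · exact Prod.ext hb ha
  · obtain rfl : j = j' := ha
    exact Prod.ext ((hL.2 j).1 hb) rfl
  · obtain rfl : i = i' := hb
    exact Prod.ext rfl ((hL.1 i).1 ha)
  · obtain rfl : j = j' := hb
    exact Prod.ext ((hL.2 j).1 ha) rfl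

lemma exists_cellCoord_eq (hL : IsLatin n L) {a b : Fin 3} (hab : a ≠ b) (x y : Fin n) :
    ∃ c, cellCoord L a c = x ∧ cellCoord L b c = y := by
  fin_cases a <;> fin_cases b <;> simp only [ne_eq, not_true_eq_false] at hab
  · exact ⟨(x, y), rfl, rfl⟩
  · obtain ⟨j, hj⟩ := (hL.1 x).2 y
    exact ⟨(x, j), rfl, hj⟩
  · exact ⟨(y, x), rfl, rfl⟩
  · obtain ⟨i, hi⟩ := (hL.2 x).2 y
    exact ⟨(i, x), rfl, hi⟩
  · obtain ⟨j, hj⟩ := (hL.1 y).2 x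
    exact ⟨(y, j), hj, rfl⟩
  · obtain ⟨i, hi⟩ := (hL.2 y).2 x
    exact ⟨(i, y), hi, rfl⟩

lemma sum_filter_cellCoord_eq (hL : IsLatin n L) {M : Type*} [AddCommMonoid M] {a b : Fin 3}
    (hab : a ≠ b) (x : Fin n) (g : Fin n → M) :
    ∑ c with cellCoord L a c = x, g (cellCoord L b c) = ∑ y, g y := by
  refine sum_nbij (cellCoord L b) (fun _ _ => mem_univ _) ?_ ?_ fun _ _ => rfl
  · intro c hc v hv h
    simp only [coe_filter, mem_univ, true_and, Set.mem_ofPred_eq] at hc hv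
    exact hL.eq_of_cellCoord_eq hab (hc.trans hv.symm) h
  · intro y _
    obtain ⟨c, hc, rfl⟩ := hL.exists_cellCoord_eq hab x y
    exact ⟨c, by simpa using hc, rfl⟩

lemma card_filter_cellCoord_eq (hL : IsLatin n L) (a : Fin 3) (x : Fin n) :
    #{c | cellCoord L a c = x} = n := by
  have hne : a ≠ a + 1 := by fin_cases a <;> decide
  rw [card_eq_sum_ones, hL.sum_filter_cellCoord_eq hne x fun _ => 1]
  simp

lemma ncard_inter_neighborSet (hL : IsLatin n L) {S : Set (Fin n × Fin n)} {v : Fin n × Fin n}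
    (hv : v ∉ S) :
    (S ∩ (latinGraph n L).neighborSet v).ncard =
      ∑ a, {c ∈ S | cellCoord L a c = cellCoord L a v}.ncard := by
  have hunion : S ∩ (latinGraph n L).neighborSet v =
      ⋃ a, {c ∈ S | cellCoord L a c = cellCoord L a v} := by
    ext c
    simp only [Set.mem_inter_iff, SimpleGraph.mem_neighborSet, latinGraph_adj_iff,
      Set.mem_iUnion, Set.mem_ofPred_eq]
    exact ⟨fun ⟨hc, _, h⟩ => h.imp fun _ => And.intro hc,
      fun ⟨a, hc, h⟩ => ⟨hc, fun hvc => hv (hvc ▸ hc), a, h⟩⟩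
  rw [hunion, Set.ncard_iUnion_of_finite (fun _ => Set.toFinite _), finsum_eq_sum_of_fintype]
  exact fun a b hab => Set.disjoint_left.mpr fun c ⟨hc, ha⟩ ⟨_, hb⟩ =>
    hv (hL.eq_of_cellCoord_eq hab ha hb ▸ hc)

lemma isKDominating_three_of_nonempty (hL : IsLatin n L) {S : Set (Fin n × Fin n)}
    (hS : ∀ a x, {c ∈ S | cellCoord L a c = x}.Nonempty) :
    IsKDominating (latinGraph n L) 3 S := by
  intro v hv
  rw [hL.ncard_inter_neighborSet hv]
  calc 3 = ∑ _a : Fin 3, 1 := rfl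
    _ ≤ _ := sum_le_sum fun a _ => (hS a _).ncard_pos

lemma three_mul_le_two_mul_ncard (hL : IsLatin n L) {S : Set (Fin n × Fin n)}
    (hdom : IsKDominating (latinGraph n L) 3 S) {a : Fin 3} {x : Fin n}
    (hempty : {c ∈ S | cellCoord L a c = x} = ∅) : 3 * n ≤ 2 * S.ncard := by
  have hout : ∀ v ∈ ({v | cellCoord L a v = x} : Finset _), v ∉ S := fun v hv hvS => by
    simp only [mem_filter, mem_univ, true_and] at hv
    exact hempty.subset ⟨hvS, hv⟩
  calc 3 * n = ∑ v with cellCoord L a v = x, 3 := by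
        rw [sum_const, hL.card_filter_cellCoord_eq, smul_eq_mul, mul_comm]
    _ ≤ ∑ v with cellCoord L a v = x, ∑ b, {c ∈ S | cellCoord L b c = cellCoord L b v}.ncard :=
        sum_le_sum fun v hv => hL.ncard_inter_neighborSet (hout v hv) ▸ hdom v (hout v hv)
    _ = ∑ b, ∑ v with cellCoord L a v = x, {c ∈ S | cellCoord L b c = cellCoord L b v}.ncard :=
        sum_comm
    _ = ∑ b, if b = a then 0 else S.ncard := by
        refine sum_congr rfl fun b _ => ?_
        split_ifs with hb
        · subst hb
          exact sum_eq_zero fun v hv => by rw [(mem_filter.mp hv).2, hempty, Set.ncard_empty]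
        · exact (hL.sum_filter_cellCoord_eq (Ne.symm hb) x _).trans
            (Set.ncard_eq_sum_ncard_fiber S _).symm
    _ = 2 * S.ncard := by simp [sum_ite, filter_ne']

end IsLatin

lemma isQuasiTransversal_iff {S : Set (Fin n × Fin n)} :
    IsQuasiTransversal n L S ↔
      (∀ a x, {c ∈ S | cellCoord L a c = x}.Nonempty) ∧ S.ncard = n + 1 := by
  have hcoord : IsQuasiTransversal n L S ↔ ∀ a, ∃ x₀, {c ∈ S | cellCoord L a c = x₀}.ncard = 2 ∧
      ∀ x, x ≠ x₀ → {c ∈ S | cellCoord L a c = x}.ncard = 1 :=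
    ⟨fun ⟨h₀, h₁, h₂⟩ a => by fin_cases a; exacts [h₀, h₁, h₂], fun h => ⟨h 0, h 1, h 2⟩⟩
  simp only [hcoord, exists_eq_two_forall_ne_eq_one_iff, ← Set.ncard_eq_sum_ncard_fiber,
    Fintype.card_fin, Nat.one_le_iff_ne_zero, ← pos_iff_ne_zero, Set.ncard_pos (Set.toFinite _),
    forall_and, forall_const]

theorem stmt13 (n : ℕ) (hn : 3 ≤ n) (L : Fin n → Fin n → Fin n) (hL : IsLatin n L)
    (S : Set (Fin n × Fin n)) :
    (IsQuasiTransversal n L S →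
      IsKDominating (latinGraph n L) 3 S ∧ S.ncard = n + 1) ∧
    ((IsKDominating (latinGraph n L) 3 S ∧ S.ncard = n + 1) →
      IsQuasiTransversal n L S) := by
  rw [isQuasiTransversal_iff]
  constructor
  · rintro ⟨hfib, hcard⟩
    exact ⟨hL.isKDominating_three_of_nonempty hfib, hcard⟩
  · rintro ⟨hdom, hcard⟩
    refine ⟨fun a x => Set.nonempty_iff_ne_empty.mpr fun hempty => ?_, hcard⟩
    have := hL.three_mul_le_two_mul_ncard hdom hempty
    omega
end

section
/- For the cyclic Latin square L of even order n (the Cayley table of Z_n, with ℓ_{ij} = i + j mod n), the set S = {(i,i) : 1 ≤ i ≤ n/2} ∪ {(i,i+1) : n/2+1 ≤ i ≤ n, indices mod n} ∪ {(n/2+1, n/2+1)} is a 3-dominating set of size n+1 in the Latin square graph L_3(L,n). -/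
theorem Nat.mod_eq_ite_of_lt_add_self {m n : ℕ} (h : m < n + n) :
    m % n = if n ≤ m then m - n else m := by
  split_ifs with hnm
  · rw [Nat.mod_eq_sub_mod hnm, Nat.mod_eq_of_lt (by omega)]
  · exact Nat.mod_eq_of_lt (by omega)

section Latin

variable {n : ℕ} {L : Fin n → Fin n → Fin n}

theorem latinGraph_adj_of_ne {a b : Fin n × Fin n} (hab : a ≠ b)
    (h : a.1 = b.1 ∨ a.2 = b.2 ∨ L a.1 a.2 = L b.1 b.2) : (latinGraph n L).Adj a b := by
  rw [latinGraph, SimpleGraph.fromRel_adj]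
  exact ⟨hab, Or.inl h⟩

theorem IsLatin.eq_of_fst_eq_of_symbol_eq (hL : IsLatin n L) {a b : Fin n × Fin n}
    (h1 : a.1 = b.1) (hs : L a.1 a.2 = L b.1 b.2) : a = b := by
  rw [h1] at hs
  exact Prod.ext h1 ((hL.1 b.1).1 hs)

theorem IsLatin.eq_of_snd_eq_of_symbol_eq (hL : IsLatin n L) {a b : Fin n × Fin n}
    (h2 : a.2 = b.2) (hs : L a.1 a.2 = L b.1 b.2) : a = b := by
  rw [h2] at hs
  exact Prod.ext ((hL.2 b.2).1 hs) h2

theorem IsLatin.isKDominating_three (hL : IsLatin n L) {S : Set (Fin n × Fin n)}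
    (hrow : ∀ i, ∃ c ∈ S, c.1 = i) (hcol : ∀ j, ∃ c ∈ S, c.2 = j)
    (hsym : ∀ s, ∃ c ∈ S, L c.1 c.2 = s) : IsKDominating (latinGraph n L) 3 S := by
  intro v hv
  obtain ⟨a, haS, ha⟩ := hrow v.1
  obtain ⟨b, hbS, hb⟩ := hcol v.2
  obtain ⟨d, hdS, hd⟩ := hsym (L v.1 v.2)
  have hne : ∀ c ∈ S, c ≠ v := fun c hc hcv => hv (hcv ▸ hc)
  have hab : a ≠ b := fun h => hne a haS (Prod.ext ha (h ▸ hb))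
  have had : a ≠ d := fun h => hne a haS (hL.eq_of_fst_eq_of_symbol_eq ha (h ▸ hd))
  have hbd : b ≠ d := fun h => hne b hbS (hL.eq_of_snd_eq_of_symbol_eq hb (h ▸ hd))
  have hsub : ({a, b, d} : Set (Fin n × Fin n)) ⊆ S ∩ (latinGraph n L).neighborSet v := by
    rintro c (rfl | rfl | rfl)
    · exact ⟨haS, latinGraph_adj_of_ne (hne c haS).symm (Or.inl ha.symm)⟩
    · exact ⟨hbS, latinGraph_adj_of_ne (hne c hbS).symm (Or.inr (Or.inl hb.symm))⟩
    · exact ⟨hdS, latinGraph_adj_of_ne (hne c hdS).symm (Or.inr (Or.inr hd.symm))⟩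
  calc 3 = ({a, b, d} : Set (Fin n × Fin n)).ncard :=
        (Set.ncard_eq_three.mpr ⟨a, b, d, hab, had, hbd, rfl⟩).symm
    _ ≤ _ := Set.ncard_le_ncard hsub

end Latin

theorem isLatin_add (n : ℕ) [NeZero n] : IsLatin n fun i j => i + j :=
  ⟨fun i => (Equiv.addLeft i).bijective, fun j => (Equiv.addRight j).bijective⟩

section Cyclic

def cyclicDominatingSet (n : ℕ) : Set (Fin n × Fin n) :=
  {c | (c.1.val < n / 2 ∧ c.2 = c.1) ∨
    (n / 2 ≤ c.1.val ∧ c.2.val = (c.1.val + 1) % n) ∨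
    (c.1.val = n / 2 ∧ c.2 = c.1)}

def shiftSecondHalf (n : ℕ) (i : Fin n) : Fin n :=
  if i.val < n / 2 then i else ⟨(i.val + 1) % n, Nat.mod_lt _ (Nat.zero_lt_of_lt i.isLt)⟩

variable {n : ℕ}

theorem val_shiftSecondHalf (i : Fin n) :
    (shiftSecondHalf n i).val = if i.val < n / 2 then i.val else (i.val + 1) % n := by
  unfold shiftSecondHalf
  split_ifs <;> rfl

theorem mem_cyclicDominatingSet_iff {c : Fin n × Fin n} :
    c ∈ cyclicDominatingSet n ↔ c.2 = shiftSecondHalf n c.1 ∨ (c.1.val = n / 2 ∧ c.2 = c.1) := by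
  simp only [cyclicDominatingSet, Set.mem_ofPred_eq, Fin.ext_iff, val_shiftSecondHalf]
  split_ifs <;> omega

theorem cyclicDominatingSet_eq_insert_range (hpos : 0 < n) :
    cyclicDominatingSet n = insert (⟨n / 2, by omega⟩, ⟨n / 2, by omega⟩)
      (Set.range fun i => (i, shiftSecondHalf n i)) := by
  ext ⟨i, j⟩
  simp only [mem_cyclicDominatingSet_iff, Set.mem_insert_iff, Set.mem_range, Prod.mk.injEq,
    exists_eq_left, Fin.ext_iff (a := i), Fin.ext_iff (a := j)]
  grind

theorem exists_mem_cyclicDominatingSet_fst_eq (i : Fin n) :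
    ∃ c ∈ cyclicDominatingSet n, c.1 = i :=
  ⟨(i, shiftSecondHalf n i), mem_cyclicDominatingSet_iff.mpr (Or.inl rfl), rfl⟩

theorem exists_mem_cyclicDominatingSet_snd_eq (j : Fin n) :
    ∃ c ∈ cyclicDominatingSet n, c.2 = j := by
  by_cases hj : j.val ≤ n / 2
  · refine ⟨(j, j), ?_, rfl⟩
    simp only [cyclicDominatingSet, Set.mem_ofPred_eq, Fin.ext_iff, and_true]
    omega
  · refine ⟨(⟨j.val - 1, by omega⟩, j), ?_, rfl⟩
    simp only [cyclicDominatingSet, Set.mem_ofPred_eq, Fin.ext_iff]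
    rw [Nat.mod_eq_ite_of_lt_add_self (by omega)]
    split_ifs <;> omega

theorem exists_mem_cyclicDominatingSet_add_eq (hn : Even n) (s : Fin n) :
    ∃ c ∈ cyclicDominatingSet n, c.1 + c.2 = s := by
  obtain ⟨h, rfl⟩ := hn
  obtain ⟨t, ht | ht⟩ := Nat.even_or_odd' s.val
  · refine ⟨(⟨t, by omega⟩, ⟨t, by omega⟩), ?_, ?_⟩
    · simp only [cyclicDominatingSet, Set.mem_ofPred_eq, Fin.ext_iff, and_true]
      omega
    · rw [Fin.ext_iff, Fin.val_add_eq_ite]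
      dsimp only
      split_ifs <;> omega
  · refine ⟨(⟨t + h, by omega⟩, ⟨(t + h + 1) % (h + h), Nat.mod_lt _ (by omega)⟩), ?_, ?_⟩
    · simp only [cyclicDominatingSet, Set.mem_ofPred_eq, Fin.ext_iff, and_true]
      omega
    · rw [Fin.ext_iff, Fin.val_add_eq_ite]
      simp only
      rw [Nat.mod_eq_ite_of_lt_add_self (by omega)]
      split_ifs <;> omega

theorem ncard_cyclicDominatingSet (hn : Even n) (hpos : 0 < n) :
    (cyclicDominatingSet n).ncard = n + 1 := by
  have hinj : Function.Injective fun i => (i, shiftSecondHalf n i) :=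
    fun _ _ h => congrArg Prod.fst h
  have hnotMem : (⟨n / 2, by omega⟩, ⟨n / 2, by omega⟩) ∉
      Set.range fun i => (i, shiftSecondHalf n i) := by
    rintro ⟨i, hi⟩
    obtain ⟨rfl, hfix⟩ := Prod.mk.inj hi
    have hval := congrArg Fin.val hfix
    obtain ⟨h, rfl⟩ := hn
    rw [val_shiftSecondHalf, Nat.mod_eq_ite_of_lt_add_self (by omega)] at hval
    split_ifs at hval <;> dsimp only at * <;> omega
  rw [cyclicDominatingSet_eq_insert_range hpos, Set.ncard_insert_of_notMem hnotMem,
    Set.ncard_range_of_injective hinj, Nat.card_eq_fintype_card, Fintype.card_fin]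

end Cyclic

theorem stmt15 (n : ℕ) (hn : Even n) (hpos : 0 < n) :
    IsKDominating (latinGraph n fun i j => i + j) 3
      {c : Fin n × Fin n |
        (c.1.val < n / 2 ∧ c.2 = c.1) ∨
        (n / 2 ≤ c.1.val ∧ c.2.val = (c.1.val + 1) % n) ∨
        (c.1.val = n / 2 ∧ c.2 = c.1)} ∧
    ({c : Fin n × Fin n |
        (c.1.val < n / 2 ∧ c.2 = c.1) ∨
        (n / 2 ≤ c.1.val ∧ c.2.val = (c.1.val + 1) % n) ∨
        (c.1.val = n / 2 ∧ c.2 = c.1)}).ncard = n + 1 := by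
  have : NeZero n := ⟨hpos.ne'⟩
  exact ⟨(isLatin_add n).isKDominating_three exists_mem_cyclicDominatingSet_fst_eq
      exists_mem_cyclicDominatingSet_snd_eq (exists_mem_cyclicDominatingSet_add_eq hn),
    ncard_cyclicDominatingSet hn hpos⟩
end

section
/- The cyclic Latin square of even order n (Cayley table of Z_n) has a 2-transversal: explicitly, the union of the quasi-transversal S = {(i,i) : 1 ≤ i ≤ n/2} ∪ {(i,i+1) : n/2+1 ≤ i ≤ n} ∪ {(n/2+1, n/2+1)} and the near-transversal S' = {(i,i+1) : 1 ≤ i ≤ n/2} ∪ {(i,i) : n/2+2 ≤ i ≤ n} is a set of 2n cells with exactly 2 cells in each row, 2 in each column, and each symbol occurring exactly twice. -/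
/-!
`S ∪ S'` is the band of cells `(i, i)` and `(i, i + 1)`, which is a 2-plex of the cyclic square
as soon as `n ≥ 2`. Rows and columns meet the band in two cells each. For the symbols, list the
band as `(0,0), (0,1), (1,1), (1,2), …, (n-1,n-1), (n-1,0)`: the `j`-th cell has row `⌊j/2⌋` and
column `⌈j/2⌉`, hence symbol `j mod n`, so as `j` runs over `0, …, 2n-1` each symbol occurs
exactly twice (at `j = s` and `j = s + n`).
-/

section Band

variable {G : Type*} [AddGroup G]

def band (a : G) : Set (G × G) :=
  {c | c.2 = c.1 ∨ c.2 = c.1 + a}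

@[simp]
lemma mem_band {a : G} {c : G × G} : c ∈ band a ↔ c.2 = c.1 ∨ c.2 = c.1 + a :=
  Iff.rfl

lemma ncard_sep_band_fst {a : G} (ha : a ≠ 0) (g : G) :
    {c ∈ band a | c.1 = g}.ncard = 2 := by
  have hrow : {c ∈ band a | c.1 = g} = {(g, g), (g, g + a)} := by
    ext ⟨x, y⟩
    simp only [Set.mem_ofPred_eq, mem_band, Set.mem_insert_iff, Set.mem_singleton_iff, Prod.mk.injEq]
    constructor
    · rintro ⟨rfl | rfl, rfl⟩ <;> simp
    · rintro (⟨rfl, rfl⟩ | ⟨rfl, rfl⟩) <;> simp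
  rw [hrow, Set.ncard_pair fun h => ha (left_eq_add.mp (congrArg Prod.snd h))]

lemma ncard_sep_band_snd {a : G} (ha : a ≠ 0) (g : G) :
    {c ∈ band a | c.2 = g}.ncard = 2 := by
  have hcol : {c ∈ band a | c.2 = g} = {(g, g), (g - a, g)} := by
    ext ⟨x, y⟩
    simp only [Set.mem_ofPred_eq, mem_band, Set.mem_insert_iff, Set.mem_singleton_iff, Prod.mk.injEq]
    constructor
    · rintro ⟨rfl | rfl, rfl⟩ <;> simp
    · rintro (⟨rfl, rfl⟩ | ⟨rfl, rfl⟩) <;> simp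
  rw [hcol, Set.ncard_pair fun h => ha (sub_eq_self.mp (congrArg Prod.fst h).symm)]

end Band

section Cyclic

open Fin.NatCast

variable {n : ℕ}

lemma Fin.one_ne_zero_of_one_lt [NeZero n] (hn : 1 < n) : (1 : Fin n) ≠ 0 := by
  simp [Fin.ext_iff, Nat.mod_eq_of_lt hn]

lemma natCast_eq_iff_of_lt_two_mul [NeZero n] {j : ℕ} (hj : j < 2 * n) (s : Fin n) :
    (j : Fin n) = s ↔ j = s ∨ j = s + n := by
  have hs := s.isLt
  rw [Fin.ext_iff, Fin.val_natCast]
  rcases lt_or_ge j n with hjn | hjn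
  · rw [Nat.mod_eq_of_lt hjn]; omega
  · rw [Nat.mod_eq_sub_mod hjn, Nat.mod_eq_of_lt (by omega)]; omega

def bandCell (n : ℕ) [NeZero n] (j : ℕ) : Fin n × Fin n :=
  (((j / 2 : ℕ) : Fin n), (((j + 1) / 2 : ℕ) : Fin n))

variable [NeZero n]

lemma bandCell_mem (j : ℕ) : bandCell n j ∈ band (1 : Fin n) := by
  rcases Nat.even_or_odd' j with ⟨k, rfl | rfl⟩
  · left
    simp [bandCell, show (2 * k + 1) / 2 = k by omega]
  · right
    simp [bandCell, show (2 * k + 1 + 1) / 2 = k + 1 by omega, show (2 * k + 1) / 2 = k by omega]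

lemma bandCell_fst_add_snd (j : ℕ) : (bandCell n j).1 + (bandCell n j).2 = (j : Fin n) := by
  simp only [bandCell, ← Nat.cast_add, show j / 2 + (j + 1) / 2 = j by omega]

lemma exists_bandCell_eq {c : Fin n × Fin n} (hc : c ∈ band 1) :
    ∃ j < 2 * n, bandCell n j = c := by
  have hlt := c.1.isLt
  have hhalf : (2 * (c.1 : ℕ) + 1) / 2 = c.1 := by omega
  rcases hc with h | h
  · exact ⟨2 * c.1, by omega, Prod.ext (by simp [bandCell]) (by simp [bandCell, hhalf, h])⟩
  · refine ⟨2 * c.1 + 1, by omega, Prod.ext (by simp [bandCell, hhalf]) ?_⟩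
    simp [bandCell, h, show (2 * (c.1 : ℕ) + 1 + 1) / 2 = c.1 + 1 by omega]

lemma ncard_sep_band_add (hn : 1 < n) (s : Fin n) :
    {c ∈ band (1 : Fin n) | c.1 + c.2 = s}.ncard = 2 := by
  have hsym : {c ∈ band (1 : Fin n) | c.1 + c.2 = s} = {bandCell n s, bandCell n (s + n)} := by
    ext c
    simp only [Set.mem_sep_iff, Set.mem_insert_iff, Set.mem_singleton_iff]
    constructor
    · rintro ⟨hc, hcs⟩
      obtain ⟨j, hj, rfl⟩ := exists_bandCell_eq hc
      rw [bandCell_fst_add_snd, natCast_eq_iff_of_lt_two_mul hj] at hcs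
      rcases hcs with rfl | rfl <;> simp
    · rintro (rfl | rfl) <;> refine ⟨bandCell_mem _, ?_⟩ <;> simp [bandCell_fst_add_snd]
  have hs := s.isLt
  have hne : bandCell n s ≠ bandCell n (s + n) := by
    intro h
    have := congrArg (fun c => c.1.val) h
    simp only [bandCell, Fin.val_natCast] at this
    rw [Nat.mod_eq_of_lt (by omega), Nat.mod_eq_of_lt (by omega)] at this
    omega
  rw [hsym, Set.ncard_pair hne]

lemma isKPlex_band (hn : 1 < n) : IsKPlex n (· + ·) 2 (band (1 : Fin n)) :=
  ⟨ncard_sep_band_fst (Fin.one_ne_zero_of_one_lt hn),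
    ncard_sep_band_snd (Fin.one_ne_zero_of_one_lt hn), ncard_sep_band_add hn⟩

end Cyclic

section Transversals

variable (n : ℕ)

def cyclicQuasiTransversal : Set (Fin n × Fin n) :=
  {c | (c.1.val < n / 2 ∧ c.2 = c.1) ∨
    (n / 2 ≤ c.1.val ∧ c.2.val = (c.1.val + 1) % n) ∨
    (c.1.val = n / 2 ∧ c.2 = c.1)}

def cyclicNearTransversal : Set (Fin n × Fin n) :=
  {c | (c.1.val < n / 2 ∧ c.2.val = (c.1.val + 1) % n) ∨
    (n / 2 + 1 ≤ c.1.val ∧ c.2 = c.1)}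

variable {n}

lemma Fin.val_eq_add_one_mod_iff [NeZero n] {a b : Fin n} :
    b.val = (a.val + 1) % n ↔ b = a + 1 := by
  rw [Fin.ext_iff, Fin.val_add, Fin.val_one', Nat.add_mod_mod]

lemma disjoint_cyclicQuasiTransversal_cyclicNearTransversal (hn : 1 < n) :
    Disjoint (cyclicQuasiTransversal n) (cyclicNearTransversal n) := by
  have : NeZero n := ⟨by omega⟩
  have hne : ∀ a : Fin n, a + 1 ≠ a := fun a h =>
    Fin.one_ne_zero_of_one_lt hn (left_eq_add.mp h.symm)
  rw [Set.disjoint_left]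
  rintro ⟨a, b⟩ hS hS'
  simp only [cyclicQuasiTransversal, cyclicNearTransversal, Set.mem_ofPred_eq,
    Fin.val_eq_add_one_mod_iff] at hS hS'
  grind

lemma cyclicQuasiTransversal_union_cyclicNearTransversal [NeZero n] :
    cyclicQuasiTransversal n ∪ cyclicNearTransversal n = band (1 : Fin n) := by
  ext ⟨a, b⟩
  simp only [cyclicQuasiTransversal, cyclicNearTransversal, Set.mem_union, Set.mem_ofPred_eq,
    Fin.val_eq_add_one_mod_iff, mem_band]
  grind

end Transversals

theorem stmt19 (n : ℕ) (hn : Even n) (hpos : 0 < n) :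
    Disjoint
      {c : Fin n × Fin n |
        (c.1.val < n / 2 ∧ c.2 = c.1) ∨
        (n / 2 ≤ c.1.val ∧ c.2.val = (c.1.val + 1) % n) ∨
        (c.1.val = n / 2 ∧ c.2 = c.1)}
      {c : Fin n × Fin n |
        (c.1.val < n / 2 ∧ c.2.val = (c.1.val + 1) % n) ∨
        (n / 2 + 1 ≤ c.1.val ∧ c.2 = c.1)} ∧
    IsKPlex n (fun i j => i + j) 2
      ({c : Fin n × Fin n |
        (c.1.val < n / 2 ∧ c.2 = c.1) ∨
        (n / 2 ≤ c.1.val ∧ c.2.val = (c.1.val + 1) % n) ∨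
        (c.1.val = n / 2 ∧ c.2 = c.1)} ∪
       {c : Fin n × Fin n |
        (c.1.val < n / 2 ∧ c.2.val = (c.1.val + 1) % n) ∨
        (n / 2 + 1 ≤ c.1.val ∧ c.2 = c.1)}) := by
  have hn1 : 1 < n := by
    obtain ⟨m, rfl⟩ := hn
    omega
  have : NeZero n := ⟨hpos.ne'⟩
  refine ⟨disjoint_cyclicQuasiTransversal_cyclicNearTransversal hn1, ?_⟩
  change IsKPlex n _ 2 (cyclicQuasiTransversal n ∪ cyclicNearTransversal n)
  rw [cyclicQuasiTransversal_union_cyclicNearTransversal]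
  exact isKPlex_band hn1
end
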